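/- For any simply connected region R, any two order-n ribbon tilings α and β of R contain the same number of tiles of each level c ∈ ℤ. -/

import Mathlib

/-- A square of the grid, indexed by its `(x, y)` coordinates. -/
abbrev Square : Type := ℤ × ℤ

/-- Two squares are adjacent if they share an edge. -/
def SqAdj (s t : Square) : Prop :=
  (s.1 = t.1 ∧ (s.2 = t.2 + 1 ∨ s.2 + 1 = t.2)) ∨
  (s.2 = t.2 ∧ (s.1 = t.1 + 1 ∨ s.1 + 1 = t.1))

/-- A set of squares is connected with respect to edge-adjacency. -/
def ConnOn (S : Set Square) : Prop :=
  ∀ a ∈ S, ∀ b ∈ S, Relation.ReflTransGen (fun x y => x ∈ S ∧ y ∈ S ∧ SqAdj x y) a b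

/-- Winding number of a sequence of squares around the square `p`: the signed
number of crossings of the upward vertical ray above (the center of) `p`;
a leftward horizontal move strictly above `p` counts `+1`, so that a
counterclockwise loop around `p` has winding number `+1`. -/
def sqWinding (p : Square) (L : List Square) : ℤ :=
  ((L.zip L.tail).map (fun ab : Square × Square =>
    if ab.1.2 = ab.2.2 ∧ p.2 < ab.1.2 ∧ ab.1.1 = p.1 + 1 ∧ ab.2.1 = p.1 then (1 : ℤ)
    else if ab.1.2 = ab.2.2 ∧ p.2 < ab.1.2 ∧ ab.1.1 = p.1 ∧ ab.2.1 = p.1 + 1 then (-1 : ℤ)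
    else 0)).sum

/-- A closed cycle of squares all lying in `S`. -/
def SqLoopIn (S : Set Square) (L : List Square) : Prop :=
  L ≠ [] ∧ (∀ s ∈ L, s ∈ S) ∧ L.Chain' SqAdj ∧ L.head? = L.getLast?

/-- A set of squares is simply connected if no cycle of squares in it encircles
a square outside of it with nonzero winding number. -/
def SimplyConnectedSq (S : Set Square) : Prop :=
  ∀ p : Square, p ∉ S → ∀ L : List Square, SqLoopIn S L → sqWinding p L = 0

/-- A region: a finite, nonempty, connected set of squares. -/
def IsRegion (R : Finset Square) : Prop := R.Nonempty ∧ ConnOn ↑R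

/-- A ribbon tile of order `n`: a connected set of `n` squares containing
exactly one square of each color `c`, where the square `(x, y)` has color
`(x + y) mod n`. -/
def IsRibbonTile (n : ℕ) (t : Finset Square) : Prop :=
  ConnOn ↑t ∧ t.card = n ∧
  ∀ c : ℤ, 0 ≤ c → c < n → ∃! s, s ∈ t ∧ (s.1 + s.2) % n = c

/-- An order-`n` ribbon tiling of `R`: a partition of `R` into order-`n`
ribbon tiles. -/
def IsRibbonTiling (n : ℕ) (R : Finset Square) (α : Finset (Finset Square)) : Prop :=
  (∀ t ∈ α, IsRibbonTile n t) ∧ (∀ t ∈ α, t ⊆ R) ∧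
  (∀ s ∈ R, ∃! t, t ∈ α ∧ s ∈ t)

/-- Two tilings differ by a local replacement move: one is obtained from the
other by removing a single pair of tiles and adding a different pair of tiles
covering the same squares. -/
def LocalMove (α β : Finset (Finset Square)) : Prop :=
  ∃ t₁ t₂ u₁ u₂ : Finset Square, t₁ ∈ α ∧ t₂ ∈ α ∧ t₁ ≠ t₂ ∧ u₁ ≠ u₂ ∧
    ({t₁, t₂} : Finset (Finset Square)) ≠ {u₁, u₂} ∧
    t₁ ∪ t₂ = u₁ ∪ u₂ ∧
    β = (α \ {t₁, t₂}) ∪ {u₁, u₂}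

/-- The "left of" relation on squares: `s` is directly left (same level,
smaller `x`) or indirectly left (levels differing by one, `x ≤ x'`, `y ≥ y'`)
of `s'`. -/
def sqPrec (s t : Square) : Prop :=
  (s.1 + s.2 = t.1 + t.2 ∧ s.1 < t.1) ∨
  (|s.1 + s.2 - (t.1 + t.2)| = 1 ∧ s.1 ≤ t.1 ∧ t.2 ≤ s.2)

/-- The "left of" relation for (sets of) squares: `t₁ ≺ t₂` if some square of
`t₁` is left of some square of `t₂`.  A single square `s` is treated as the
singleton `{s}`. -/
def TilePrec (t₁ t₂ : Finset Square) : Prop :=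
  ∃ s₁ ∈ t₁, ∃ s₂ ∈ t₂, sqPrec s₁ s₂

/-- The boundary `B_R` of a region: squares not in `R` adjacent to a square
of `R`. -/
def boundarySet (R : Finset Square) : Set Square :=
  {s | s ∉ R ∧ ∃ r ∈ R, SqAdj s r}

/-- The level of a tile: the level `x + y` of its lowest square. -/
def tileLevel (t : Finset Square) : ℤ := ((t.image fun s : Square => s.1 + s.2).min).untopD 0

/-- `IsNthTile α c i t`: `t` is the tile `t_{c,i}(α)`, i.e. the `i`-th tile
(0-indexed, from left to right with respect to `≺`) of level `c` in the
tiling `α`. -/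
def IsNthTile (α : Finset (Finset Square)) (c : ℤ) (i : ℕ) (t : Finset Square) : Prop :=
  t ∈ α ∧ tileLevel t = c ∧
  {t' : Finset Square | t' ∈ α ∧ t' ≠ t ∧ tileLevel t' = c ∧ TilePrec t' t}.ncard = i

/-!
A ribbon tile is connected and has pairwise distinct colors, so its levels form an interval of
exactly `n` consecutive integers starting at its own level. Hence, in any tiling of `R`, the number
of squares of `R` at level `ℓ` is the number of tiles whose level lies in `(ℓ - n, ℓ]`. No tile lies
below the lowest level of `R`, so these equations determine the number of tiles of each level one
level at a time, whatever the tiling.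
-/

open Finset

theorem Int.eq_of_sum_Ioc_eq {M : Type*} [AddCancelCommMonoid M] {f g : ℤ → M} {k : ℕ}
    (hk : 0 < k) {m : ℤ} (hlt : ∀ c < m, f c = g c)
    (hsum : ∀ ℓ : ℤ, ∑ c ∈ Ioc (ℓ - k) ℓ, f c = ∑ c ∈ Ioc (ℓ - k) ℓ, g c) : f = g := by
  have hbelow : ∀ ℓ, m ≤ ℓ → ∀ c < ℓ, f c = g c := by
    intro ℓ hℓ
    induction ℓ, hℓ using Int.leInduction with
    | base => exact hlt
    | succ ℓ _ ih =>
      have hℓ : f ℓ = g ℓ := by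
        have h := hsum ℓ
        rw [← Ioo_insert_right (by omega : ℓ - k < ℓ), sum_insert right_notMem_Ioo,
          sum_insert right_notMem_Ioo, sum_congr rfl fun c hc => ih c (mem_Ioo.1 hc).2] at h
        exact add_right_cancel h
      intro c hc
      rcases (Int.lt_add_one_iff.1 hc).lt_or_eq with hc | rfl
      · exact ih c hc
      · exact hℓ
  funext c
  rcases lt_or_ge c m with hc | hc
  · exact hlt c hc
  · exact hbelow (c + 1) (by omega) c (by omega)

def sqLevel (s : Square) : ℤ := s.1 + s.2

lemma SqAdj.sqLevel_eq_or {s t : Square} (h : SqAdj s t) :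
    sqLevel s = sqLevel t + 1 ∨ sqLevel t = sqLevel s + 1 := by
  unfold sqLevel
  rcases h with ⟨_, _ | _⟩ | ⟨_, _ | _⟩ <;> omega

lemma ConnOn.exists_sqLevel_eq {t : Set Square} (ht : ConnOn t) {a b : Square} (ha : a ∈ t)
    (hb : b ∈ t) {ℓ : ℤ} (haℓ : sqLevel a ≤ ℓ) (hℓb : ℓ ≤ sqLevel b) :
    ∃ s ∈ t, sqLevel s = ℓ := by
  induction ht a ha b hb with
  | refl => exact ⟨a, ha, by omega⟩
  | @tail u v _ huv ih =>
    rcases le_or_gt ℓ (sqLevel u) with hℓu | hℓu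
    · exact ih huv.1 hℓu
    · have := huv.2.2.sqLevel_eq_or
      exact ⟨v, huv.2.1, by omega⟩

lemma ConnOn.image_sqLevel_eq_Icc {t : Finset Square} (ht : ConnOn (t : Set Square))
    (hne : t.Nonempty) :
    t.image sqLevel =
      Icc ((t.image sqLevel).min' (hne.image _)) ((t.image sqLevel).max' (hne.image _)) := by
  refine Subset.antisymm (fun x hx => mem_Icc.2 ⟨min'_le _ _ hx, le_max' _ _ hx⟩) fun x hx => ?_
  obtain ⟨a, ha, hax⟩ := mem_image.1 (min'_mem _ (hne.image sqLevel))
  obtain ⟨b, hb, hbx⟩ := mem_image.1 (max'_mem _ (hne.image sqLevel))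
  obtain ⟨s, hs, rfl⟩ :=
    ht.exists_sqLevel_eq ha hb (hax ▸ (mem_Icc.1 hx).1) (hbx ▸ (mem_Icc.1 hx).2)
  exact mem_image_of_mem _ hs

lemma tileLevel_eq_min' {t : Finset Square} (hne : t.Nonempty) :
    tileLevel t = (t.image sqLevel).min' (hne.image _) := by
  show ((t.image sqLevel).min).untopD 0 = _
  rw [← coe_min' (hne.image _)]
  rfl

lemma IsRibbonTile.injOn_sqLevel {n : ℕ} (hn : 0 < n) {t : Finset Square}
    (ht : IsRibbonTile n t) : Set.InjOn sqLevel t := by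
  intro s hs s' hs' h
  obtain ⟨u, -, hu⟩ :=
    ht.2.2 (sqLevel s % n) (Int.emod_nonneg _ (by omega)) (Int.emod_lt_of_pos _ (by omega))
  exact (hu s ⟨hs, rfl⟩).trans (hu s' ⟨hs', congrArg (· % (n : ℤ)) h.symm⟩).symm

lemma IsRibbonTile.image_sqLevel {n : ℕ} (hn : 0 < n) {t : Finset Square}
    (ht : IsRibbonTile n t) : t.image sqLevel = Ico (tileLevel t) (tileLevel t + n) := by
  have hne : t.Nonempty := card_pos.1 (ht.2.1 ▸ hn)
  have hcard : (t.image sqLevel).card = n :=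
    (card_image_of_injOn (ht.injOn_sqLevel hn)).trans ht.2.1
  rw [ht.1.image_sqLevel_eq_Icc hne, Int.card_Icc] at hcard
  rw [ht.1.image_sqLevel_eq_Icc hne, tileLevel_eq_min' hne]
  ext x
  simp only [mem_Icc, mem_Ico]
  omega

lemma IsRibbonTile.card_filter_sqLevel_eq {n : ℕ} (hn : 0 < n) {t : Finset Square}
    (ht : IsRibbonTile n t) (ℓ : ℤ) :
    (t.filter (sqLevel · = ℓ)).card = if tileLevel t ∈ Ioc (ℓ - n) ℓ then 1 else 0 := by
  rw [← card_image_of_injOn ((ht.injOn_sqLevel hn).mono (filter_subset _ _)), ← filter_image (p := (· = ℓ)),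
    ht.image_sqLevel hn, filter_eq']
  simp only [mem_Ico, mem_Ioc]
  split_ifs <;> first | rfl | omega

lemma IsRibbonTiling.card_filter_eq_sum {n : ℕ} {R : Finset Square} {α : Finset (Finset Square)}
    (hα : IsRibbonTiling n R α) (p : Square → Prop) [DecidablePred p] :
    (R.filter p).card = ∑ t ∈ α, (t.filter p).card := by
  have hR : R.filter p = α.biUnion (·.filter p) := by
    ext s
    simp only [mem_filter, mem_biUnion]
    constructor
    · rintro ⟨hs, hp⟩
      obtain ⟨t, ⟨ht, hst⟩, -⟩ := hα.2.2 s hs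
      exact ⟨t, ht, hst, hp⟩
    · rintro ⟨t, ht, hst, hp⟩
      exact ⟨hα.2.1 t ht hst, hp⟩
  rw [hR, card_biUnion]
  intro t ht u hu htu
  refine disjoint_filter_filter (disjoint_left.2 fun s hst hsu => htu ?_)
  obtain ⟨_, -, huniq⟩ := hα.2.2 s (hα.2.1 t ht hst)
  exact (huniq t ⟨ht, hst⟩).trans (huniq u ⟨hu, hsu⟩).symm

def levelCount (α : Finset (Finset Square)) (c : ℤ) : ℕ := (α.filter (tileLevel · = c)).card

lemma IsRibbonTiling.card_filter_sqLevel_eq_sum {n : ℕ} (hn : 0 < n) {R : Finset Square}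
    {α : Finset (Finset Square)} (hα : IsRibbonTiling n R α) (ℓ : ℤ) :
    (R.filter (sqLevel · = ℓ)).card = ∑ c ∈ Ioc (ℓ - n) ℓ, levelCount α c := by
  rw [hα.card_filter_eq_sum, sum_congr rfl fun t ht => (hα.1 t ht).card_filter_sqLevel_eq hn ℓ]
  simp only [levelCount, card_filter]
  rw [sum_comm]
  exact sum_congr rfl fun t _ => (sum_ite_eq _ _ fun _ => 1).symm

lemma IsRibbonTiling.levelCount_eq_zero_of_lt {n : ℕ} (hn : 0 < n) {R : Finset Square}
    {α : Finset (Finset Square)} (hα : IsRibbonTiling n R α) {m c : ℤ}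
    (hm : ∀ s ∈ R, m ≤ sqLevel s) (hc : c < m) : levelCount α c = 0 := by
  refine card_eq_zero.2 (filter_eq_empty_iff.2 fun t ht htc => ?_)
  have hmem : tileLevel t ∈ t.image sqLevel := by
    rw [(hα.1 t ht).image_sqLevel hn]
    exact left_mem_Ico.2 (by omega)
  obtain ⟨s, hs, hsl⟩ := mem_image.1 hmem
  have := hm s (hα.2.1 t ht hs)
  omega

theorem ribbon_tilings_same_level_counts_general
    (n : ℕ) (hn : 2 ≤ n) (R : Finset Square)
    (α β : Finset (Finset Square))
    (hα : IsRibbonTiling n R α) (hβ : IsRibbonTiling n R β) :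
    ∀ c : ℤ, {t : Finset Square | t ∈ α ∧ tileLevel t = c}.ncard
      = {t : Finset Square | t ∈ β ∧ tileLevel t = c}.ncard := by
  have hpos : 0 < n := by omega
  obtain ⟨m, hm⟩ := (R.image sqLevel).bddBelow
  have hmR : ∀ s ∈ R, m ≤ sqLevel s := fun s hs => hm (mem_image_of_mem _ hs)
  have hcount : levelCount α = levelCount β :=
    Int.eq_of_sum_Ioc_eq hpos
      (fun c hc => by
        rw [hα.levelCount_eq_zero_of_lt hpos hmR hc, hβ.levelCount_eq_zero_of_lt hpos hmR hc])
      (fun ℓ => by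
        rw [← hα.card_filter_sqLevel_eq_sum hpos, ← hβ.card_filter_sqLevel_eq_sum hpos])
  intro c
  simpa only [levelCount, ← coe_filter, Set.ncard_coe_finset] using congrFun hcount c

/-- Any two order-`n` ribbon tilings of a simply connected
region `R` contain the same number of tiles of each level `c ∈ ℤ`. -/
theorem ribbon_tilings_same_level_counts
    (n : ℕ) (hn : 2 ≤ n) (R : Finset Square)
    (hreg : IsRegion R) (hsc : SimplyConnectedSq ↑R)
    (α β : Finset (Finset Square))
    (hα : IsRibbonTiling n R α) (hβ : IsRibbonTiling n R β) :
    ∀ c : ℤ, {t : Finset Square | t ∈ α ∧ tileLevel t = c}.ncard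
      = {t : Finset Square | t ∈ β ∧ tileLevel t = c}.ncard :=
  ribbon_tilings_same_level_counts_general n hn R α β hα hβ
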